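/- arXiv:2001.08846 — 4 statements merged into one kernel-verified Lean document; each statement's English description precedes it below -/
import Mathlib

section
/- (Ordinal extension nonregularity theorem.) If a language A ⊆ Σ* has unbounded ordinal extensions, then A is not regular. -/
/-- Shortlex order on strings: first by length, then lexicographically. -/
def ShortlexLt {σ : Type*} [LinearOrder σ] (x y : List σ) : Prop :=
  x.length < y.length ∨ (x.length = y.length ∧ List.Lex (· < ·) x y)

/-- `y` is the `j`-th `A`-extension of `x`: `y ∈ A_x` and exactly `j - 1`
elements of `A_x = {z | x ++ z ∈ A}` are shortlex-smaller than `y`. -/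
def IsNthExt {σ : Type*} [LinearOrder σ] (A : Set (List σ)) (j : ℕ) (x y : List σ) : Prop :=
  x ++ y ∈ A ∧ {z | x ++ z ∈ A ∧ ShortlexLt z y}.encard = ((j - 1 : ℕ) : ℕ∞)

/-- `A^(j)`: the set of all `j`-th `A`-extensions. -/
def ExtSet {σ : Type*} [LinearOrder σ] (A : Set (List σ)) (j : ℕ) : Set (List σ) :=
  {y | ∃ x, IsNthExt A j x y}

/-! A regular language has only finitely many left quotients `A_x` (Myhill–Nerode). Whether `y` is
the `j`-th `A`-extension of `x` depends on `x` only through `A_x`, and since shortlex is a strict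
total order, `A_x` has at most one `j`-th element. Hence `|A^(j)|` is bounded by the number of
left quotients of `A`, uniformly in `j`. -/

open Function Language

section StrictOrder

variable {α : Type*} {r : α → α → Prop} {S : Set α} {a b : α}

theorem encard_setOf_rel_lt_of_rel [IsStrictOrder α r] (ha : a ∈ S) (hab : r a b)
    (hfin : {z | z ∈ S ∧ r z a}.Finite) :
    {z | z ∈ S ∧ r z a}.encard < {z | z ∈ S ∧ r z b}.encard := by
  have hsub : insert a {z | z ∈ S ∧ r z a} ⊆ {z | z ∈ S ∧ r z b} := by
    rintro z (rfl | ⟨hzS, hza⟩)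
    exacts [⟨ha, hab⟩, ⟨hzS, _root_.trans hza hab⟩]
  calc {z | z ∈ S ∧ r z a}.encard
      < {z | z ∈ S ∧ r z a}.encard + 1 :=
        (ENat.lt_add_one_iff hfin.encard_lt_top.ne).mpr le_rfl
    _ = (insert a {z | z ∈ S ∧ r z a}).encard :=
        (Set.encard_insert_of_notMem fun h => irrefl a h.2).symm
    _ ≤ {z | z ∈ S ∧ r z b}.encard := Set.encard_le_encard hsub

theorem eq_of_encard_setOf_rel_eq [IsStrictTotalOrder α r] {k : ℕ} (ha : a ∈ S) (hb : b ∈ S)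
    (hka : {z | z ∈ S ∧ r z a}.encard = k) (hkb : {z | z ∈ S ∧ r z b}.encard = k) :
    a = b := by
  rcases trichotomous_of r a b with hab | rfl | hba
  · have := encard_setOf_rel_lt_of_rel ha hab (Set.finite_of_encard_eq_coe hka)
    exact absurd this (by rw [hka, hkb]; exact lt_irrefl _)
  · rfl
  · have := encard_setOf_rel_lt_of_rel hb hba (Set.finite_of_encard_eq_coe hkb)
    exact absurd this (by rw [hka, hkb]; exact lt_irrefl _)

end StrictOrder

section Shortlex

variable {σ : Type*} [LinearOrder σ]

theorem shortlexLt_eq_onFun :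
    (ShortlexLt : List σ → List σ → Prop) =
      ((· < ·) on fun l : List σ => toLex (l.length, l)) := by
  ext x y
  simp only [onFun, Prod.Lex.toLex_lt_toLex, ShortlexLt]
  rfl

instance ShortlexLt.isStrictTotalOrder : IsStrictTotalOrder (List σ) ShortlexLt := by
  rw [shortlexLt_eq_onFun]
  exact Injective.isStrictTotalOrder_onFun (· < ·)
    fun _ _ h => congrArg Prod.snd (toLex.injective h)

variable {A : Set (List σ)} {j : ℕ} {x x' y y' : List σ}

theorem isNthExt_congr_leftQuotient (hq : leftQuotient A x = leftQuotient A x') :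
    IsNthExt A j x y ↔ IsNthExt A j x' y := by
  have hmem : ∀ z, x ++ z ∈ A ↔ x' ++ z ∈ A := fun z => Set.ext_iff.mp hq z
  simp only [IsNthExt, hmem]

theorem IsNthExt.unique (h : IsNthExt A j x y) (h' : IsNthExt A j x y') : y = y' :=
  eq_of_encard_setOf_rel_eq (S := leftQuotient A x) h.1 h'.1 h.2 h'.2

theorem IsNthExt.eq_of_leftQuotient_eq (h : IsNthExt A j x y) (h' : IsNthExt A j x' y')
    (hq : leftQuotient A x = leftQuotient A x') : y = y' :=
  h.unique ((isNthExt_congr_leftQuotient hq).mpr h')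

theorem encard_extSet_le_encard_range_leftQuotient (A : Set (List σ)) (j : ℕ) :
    (ExtSet A j).encard ≤ (Set.range (leftQuotient A)).encard := by
  choose! g hg using fun y (hy : y ∈ ExtSet A j) => hy
  refine Set.encard_le_encard_of_injOn (f := fun y => leftQuotient A (g y))
    (fun y _ => Set.mem_range_self _) fun y hy y' hy' hq => ?_
  exact (hg y hy).eq_of_leftQuotient_eq (hg y' hy') hq

end Shortlex

theorem stmt1_general {σ : Type*} [LinearOrder σ]
    (A : Set (List σ))
    (hub : ¬ ∃ m : ℕ, 1 ≤ m ∧ ∀ j : ℕ, 1 ≤ j → (ExtSet A j).encard ≤ (m : ℕ∞)) :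
    ¬ Language.IsRegular A := by
  intro hreg
  apply hub
  set Q := Set.range (leftQuotient A)
  have hQ : Q.Finite := IsRegular.finite_range_leftQuotient hreg
  refine ⟨max 1 Q.ncard, le_max_left _ _, fun j _ => ?_⟩
  calc (ExtSet A j).encard ≤ Q.encard := encard_extSet_le_encard_range_leftQuotient A j
    _ = Q.ncard := hQ.cast_ncard_eq.symm
    _ ≤ (max 1 Q.ncard : ℕ) := by exact_mod_cast le_max_right _ _

/-- Ordinal extension nonregularity theorem: if `A` has unbounded ordinal
extensions, then `A` is not regular. -/
theorem stmt1 {σ : Type*} [Fintype σ] [Nonempty σ] [LinearOrder σ]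
    (A : Set (List σ))
    (hub : ¬ ∃ m : ℕ, 1 ≤ m ∧ ∀ j : ℕ, 1 ≤ j → (ExtSet A j).encard ≤ (m : ℕ∞)) :
    ¬ Language.IsRegular A :=
  stmt1_general A hub
end

section
/- There exists a language A over the one-letter alphabet {0} that is not regular but has bounded ordinal extensions. -/
/-!
Let `β = √2 / 2` and let `A` consist of the words `0^m` with `⌊(m + 1) β⌋ > ⌊m β⌋`. The window
`[n, n + k)` then contains `⌊(n + k) β⌋ - ⌊n β⌋` lengths of words of `A`, a number within `1` of
`k β`. If `0^k` is the `j`-th extension of `0^n`, this window count is `j - 1`, so `k β` lies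
within `1` of `j - 1`; as `2 / β < 3`, at most three values of `k` remain.

A regular unary language is eventually periodic (two of its left quotients by `0^a`, `0^b` agree).
A period `p` would make the count over a window of `K p` letters exactly `K c` for an integer `c`,
within `1` of `K p β` for all `K`, which forces `c = p β`, contradicting irrationality.
-/

open Set
open scoped Classical

section Unary

variable {σ : Type*}

def lengthLanguage (S : Set ℕ) : Set (List σ) := {w | w.length ∈ S}

@[simp]
theorem mem_lengthLanguage {S : Set ℕ} {w : List σ} : w ∈ lengthLanguage S ↔ w.length ∈ S :=
  Iff.rfl

theorem exists_lt_forall_add_mem_iff_of_isRegular_lengthLanguage [Inhabited σ] {S : Set ℕ}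
    (h : Language.IsRegular (lengthLanguage S : Set (List σ))) :
    ∃ a b, a < b ∧ ∀ i, a + i ∈ S ↔ b + i ∈ S := by
  obtain ⟨a, b, hab, hq⟩ := h.finite_range_leftQuotient.exists_lt_map_eq_of_forall_mem
    (f := fun n => Language.leftQuotient (lengthLanguage S) (List.replicate n default))
    fun n => mem_range_self _
  refine ⟨a, b, hab, fun i => ?_⟩
  have hi : (List.replicate a default ++ List.replicate i default).length ∈ S ↔
      (List.replicate b default ++ List.replicate i default).length ∈ S :=
    Set.ext_iff.mp hq (List.replicate i default)
  simpa using hi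

variable [LinearOrder σ]

theorem shortlexLt_iff_length_lt [Subsingleton σ] {z y : List σ} :
    ShortlexLt z y ↔ z.length < y.length := by
  refine ⟨?_, Or.inl⟩
  rintro (h | ⟨hlen, hlex⟩)
  · exact h
  · rw [List.length_injective hlen] at hlex
    exact absurd hlex (List.lex_irrefl lt_irrefl y)

theorem isNthExt_lengthLanguage_iff [Unique σ] {S : Set ℕ} {j : ℕ} {x y : List σ} :
    IsNthExt (lengthLanguage S) j x y ↔
      x.length + y.length ∈ S ∧ Nat.count (fun i => x.length + i ∈ S) y.length = j - 1 := by
  have hset : {z | x ++ z ∈ lengthLanguage S ∧ ShortlexLt z y} =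
      List.length ⁻¹' ↑({i ∈ Finset.range y.length | x.length + i ∈ S}) := by
    ext z
    simp [shortlexLt_iff_length_lt, and_comm]
  unfold IsNthExt
  rw [hset, encard_preimage_of_injective_subset_range List.length_injective,
    encard_coe_eq_coe_finsetCard, ← Nat.count_eq_card_filter_range, Nat.cast_inj,
    mem_lengthLanguage, List.length_append]
  intro i _
  exact ⟨List.replicate i default, List.length_replicate⟩

end Unary

theorem eq_zero_of_forall_natCast_mul_abs_lt_one {𝕜 : Type*} [Field 𝕜] [LinearOrder 𝕜]
    [IsStrictOrderedRing 𝕜] [Archimedean 𝕜] {d : 𝕜} (h : ∀ K : ℕ, |K * d| < 1) : d = 0 := by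
  by_contra hd
  obtain ⟨K, hK⟩ := exists_nat_gt (1 / |d|)
  rw [div_lt_iff₀ (abs_pos.mpr hd)] at hK
  have := h K
  rw [abs_mul, Nat.abs_cast] at this
  linarith

theorem abs_sub_lt_one_of_floor_add_eq {x y : ℝ} {c : ℕ} (hx : 0 ≤ x) (hxy : 0 ≤ x + y)
    (h : ⌊x⌋₊ + c = ⌊x + y⌋₊) : |(c : ℝ) - y| < 1 := by
  have h' : (⌊x⌋₊ : ℝ) + c = ⌊x + y⌋₊ := by exact_mod_cast h
  rw [abs_sub_lt_iff]
  constructor <;> linarith [Nat.floor_le hx, Nat.floor_le hxy, Nat.lt_floor_add_one x,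
    Nat.lt_floor_add_one (x + y)]

section Sturmian

variable {β : ℝ}

/-- The positions of the letter `1` in the mechanical word of slope `β`; for `0 ≤ β ≤ 1` exactly
`⌊N β⌋₊` of them lie below `N`. -/
def sturmianSet (β : ℝ) : Set ℕ := {m | ⌊(m : ℝ) * β⌋₊ < ⌊((m + 1 : ℕ) : ℝ) * β⌋₊}

theorem floor_succ_mul_eq_ite_mem_sturmianSet (h0 : 0 ≤ β) (h1 : β ≤ 1) (m : ℕ) :
    ⌊((m + 1 : ℕ) : ℝ) * β⌋₊ = ⌊(m : ℝ) * β⌋₊ + if m ∈ sturmianSet β then 1 else 0 := by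
  have hmono : ⌊(m : ℝ) * β⌋₊ ≤ ⌊((m + 1 : ℕ) : ℝ) * β⌋₊ :=
    Nat.floor_le_floor (by gcongr; simp)
  have hstep : ⌊((m + 1 : ℕ) : ℝ) * β⌋₊ ≤ ⌊(m : ℝ) * β⌋₊ + 1 := by
    rw [← Nat.floor_add_one (by positivity)]
    exact Nat.floor_le_floor (by push_cast; linarith)
  split_ifs with hm
  · exact le_antisymm hstep hm
  · exact (not_lt.mp hm).antisymm hmono |>.trans (add_zero _).symm

theorem count_sturmianSet (h0 : 0 ≤ β) (h1 : β ≤ 1) (N : ℕ) :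
    Nat.count (· ∈ sturmianSet β) N = ⌊(N : ℝ) * β⌋₊ := by
  induction N with
  | zero => simp
  | succ N ih => rw [Nat.count_succ, ih, floor_succ_mul_eq_ite_mem_sturmianSet h0 h1]

theorem abs_count_add_mem_sturmianSet_sub_lt_one (h0 : 0 ≤ β) (h1 : β ≤ 1) (n k : ℕ) :
    |(Nat.count (fun i => n + i ∈ sturmianSet β) k : ℝ) - k * β| < 1 := by
  refine abs_sub_lt_one_of_floor_add_eq (x := n * β) (by positivity) (by positivity) ?_
  rw [← count_sturmianSet h0 h1, ← Nat.count_add, count_sturmianSet h0 h1]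
  push_cast
  ring_nf

theorem not_periodic_add_mem_sturmianSet (hβ : Irrational β) (h0 : 0 ≤ β) (h1 : β ≤ 1)
    (a : ℕ) {p : ℕ} (hp : p ≠ 0) : ¬ Function.Periodic (fun i => a + i ∈ sturmianSet β) p := by
  intro hper
  set c := Nat.count (fun i => a + i ∈ sturmianSet β) p
  have hcount (K : ℕ) : Nat.count (fun i => a + i ∈ sturmianSet β) (K * p) = K * c := by
    induction K with
    | zero => simp
    | succ K ih =>
      rw [add_mul, one_mul, Nat.count_add, ih, add_mul, one_mul]
      congr 2
      funext i
      rw [add_comm (K * p)]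
      exact hper.nat_mul K i
  have hne : (c : ℝ) - p * β ≠ 0 := sub_ne_zero.mpr fun h => (hβ.natCast_mul hp).ne_nat c h.symm
  refine hne (eq_zero_of_forall_natCast_mul_abs_lt_one fun K => ?_)
  have := abs_count_add_mem_sturmianSet_sub_lt_one h0 h1 a (K * p)
  rw [hcount] at this
  push_cast at this
  rwa [mul_sub, ← mul_assoc]

theorem not_isRegular_lengthLanguage_sturmianSet {σ : Type*} [Inhabited σ] (hβ : Irrational β)
    (h0 : 0 ≤ β) (h1 : β ≤ 1) :
    ¬ Language.IsRegular (lengthLanguage (sturmianSet β) : Set (List σ)) := by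
  intro h
  obtain ⟨a, b, hab, hS⟩ := exists_lt_forall_add_mem_iff_of_isRegular_lengthLanguage h
  refine not_periodic_add_mem_sturmianSet hβ h0 h1 a (Nat.sub_ne_zero_of_lt hab) fun i => ?_
  show (a + (i + (b - a)) ∈ sturmianSet β) = (a + i ∈ sturmianSet β)
  rw [show a + (i + (b - a)) = b + i by omega]
  exact propext (hS i).symm

end Sturmian

theorem Set.encard_le_of_forall_lt_add {s : Set ℕ} {d : ℕ} (h : ∀ a ∈ s, ∀ b ∈ s, b < a + d) :
    s.encard ≤ d := by
  rcases s.eq_empty_or_nonempty with rfl | hs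
  · simp
  have hmin := Nat.sInf_mem hs
  calc s.encard ≤ (Finset.Ico (sInf s) (sInf s + d) : Set ℕ).encard :=
        encard_mono fun b hb => by simpa using ⟨Nat.sInf_le hb, h _ hmin b hb⟩
    _ = d := by rw [encard_coe_eq_coe_finsetCard, Nat.card_Ico, Nat.add_sub_cancel_left]

section ExtSet

variable {σ : Type*} [LinearOrder σ] [Unique σ] {β : ℝ}

theorem abs_sub_length_mul_lt_one_of_mem_extSet (h0 : 0 ≤ β) (h1 : β ≤ 1) {j : ℕ} {y : List σ}
    (hy : y ∈ ExtSet (lengthLanguage (sturmianSet β)) j) :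
    |((j - 1 : ℕ) : ℝ) - y.length * β| < 1 := by
  obtain ⟨x, hx⟩ := hy
  rw [← (isNthExt_lengthLanguage_iff.mp hx).2]
  exact abs_count_add_mem_sturmianSet_sub_lt_one h0 h1 _ _

theorem encard_extSet_lengthLanguage_sturmianSet_le_three (h23 : 2 / 3 < β) (h1 : β ≤ 1)
    (j : ℕ) : (ExtSet (lengthLanguage (sturmianSet β) : Set (List σ)) j).encard ≤ 3 := by
  have h0 : 0 ≤ β := by linarith
  rw [← List.length_injective.encard_image]
  refine Set.encard_le_of_forall_lt_add ?_
  rintro _ ⟨y, hy, rfl⟩ _ ⟨y', hy', rfl⟩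
  have h := abs_sub_length_mul_lt_one_of_mem_extSet h0 h1 hy
  have h' := abs_sub_length_mul_lt_one_of_mem_extSet h0 h1 hy'
  rw [abs_sub_lt_iff] at h h'
  by_contra! hlen
  have : (y.length : ℝ) + 3 ≤ y'.length := by exact_mod_cast hlen
  nlinarith

end ExtSet

/-- There is a nonregular language over the one-letter alphabet with bounded
ordinal extensions. -/
theorem stmt9 :
    ∃ A : Set (List (Fin 1)), ¬ Language.IsRegular A ∧
      ∃ m : ℕ, 1 ≤ m ∧ ∀ j : ℕ, 1 ≤ j → (ExtSet A j).encard ≤ (m : ℕ∞) := by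
  have hsqrt : √2 ^ 2 = 2 := Real.sq_sqrt zero_le_two
  have h23 : 2 / 3 < √2 / 2 := by nlinarith [Real.sqrt_nonneg 2]
  have h1 : √2 / 2 ≤ 1 := by nlinarith [Real.sqrt_nonneg 2]
  refine ⟨lengthLanguage (sturmianSet (√2 / 2)),
    not_isRegular_lengthLanguage_sturmianSet (irrational_sqrt_two.div_natCast two_ne_zero)
      (by linarith) h1,
    3, by norm_num, fun j _ => ?_⟩
  exact_mod_cast encard_extSet_lengthLanguage_sturmianSet_le_three h23 h1 j
end

section
/- Let A ⊆ Σ*. If UE(A) is infinite, then A does not have infinite ordinal extensions, i.e., A^(j) is finite for every j ≥ 1. -/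
/-- `UE(A)`: the set of universal `A`-extensions. -/
def UE {σ : Type*} (A : Set (List σ)) : Set (List σ) :=
  {y | ∀ x : List σ, x ++ y ∈ A}

/-!
Universal extensions lie in `A_x` for every `x`, so if `y` is the `j`-th extension of some `x`,
fewer than `j` universal extensions can be shortlex-smaller than `y`. Fixing `j` universal
extensions, every element of `A^(j)` is therefore no longer than the longest of them, and there
are only finitely many such strings over a finite alphabet.
-/

section

variable {σ : Type*} [LinearOrder σ] {A : Set (List σ)} {j : ℕ}

theorem ShortlexLt.of_length_lt {x y : List σ} (h : x.length < y.length) : ShortlexLt x y :=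
  Or.inl h

theorem IsNthExt.card_lt_of_subset_UE {x y : List σ} (hy : IsNthExt A j x y) (hj : 1 ≤ j)
    {S : Finset (List σ)} (hS : ↑S ⊆ UE A) (hlt : ∀ s ∈ S, ShortlexLt s y) : S.card < j := by
  have hsub : (S : Set (List σ)) ⊆ {z | x ++ z ∈ A ∧ ShortlexLt z y} :=
    fun s hs => ⟨hS hs x, hlt s hs⟩
  have hle := Set.encard_mono hsub
  rw [Set.encard_coe_eq_coe_finsetCard, hy.2] at hle
  have : S.card ≤ j - 1 := by exact_mod_cast hle
  omega

theorem ExtSet_subset_length_le (hj : 1 ≤ j) {S : Finset (List σ)} (hS : ↑S ⊆ UE A)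
    (hcard : j ≤ S.card) : ExtSet A j ⊆ {y | y.length ≤ S.sup List.length} := by
  rintro y ⟨x, hy⟩
  show y.length ≤ _
  by_contra! hlong
  have hlt : ∀ s ∈ S, ShortlexLt s y :=
    fun s hs => .of_length_lt ((Finset.le_sup hs).trans_lt hlong)
  exact (hy.card_lt_of_subset_UE hj hS hlt).not_ge hcard

end

theorem stmt13_general {σ : Type*} [Fintype σ] [LinearOrder σ]
    (A : Set (List σ)) (h : (UE A).Infinite) :
    ∀ j : ℕ, 1 ≤ j → (ExtSet A j).Finite := by
  intro j hj
  obtain ⟨S, hS, hcard⟩ := h.exists_subset_card_eq j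
  exact (List.finite_length_le σ _).subset (ExtSet_subset_length_le hj hS hcard.ge)

/-- If `UE(A)` is infinite, then `A` does not have infinite ordinal
extensions. -/
theorem stmt13 {σ : Type*} [Fintype σ] [Nonempty σ] [LinearOrder σ]
    (A : Set (List σ)) (h : (UE A).Infinite) :
    ∀ j : ℕ, 1 ≤ j → (ExtSet A j).Finite :=
  stmt13_general A h
end

section
/- For all j ≥ 1, B_1^{j+1} ⊆ B_2^j · {0}. -/
/-- The languages `B_1^j` of Construction 4.4 (over the one-letter alphabet). -/
def B1 : ℕ → Language (Fin 1)
  | 0 => 0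
  | 1 => {[], [0]}
  | 2 => {[0, 0]}
  | (n + 3) => if (n + 3) % 2 = 0 then B1 (n + 1) * {[0, 0, 0]} else B1 (n + 2) * {[0], [0, 0]}

/-- The languages `B_2^j` of Construction 4.4 (over the one-letter alphabet). -/
def B2 : ℕ → Language (Fin 1)
  | 0 => 0
  | 1 => {[], [0]}
  | 2 => {[0], [0, 0], [0, 0, 0]}
  | (n + 3) => if (n + 3) % 2 = 0 then B2 (n + 2) * {[0, 0]} else B2 (n + 2) * {[0]}

/-!
Over a one-letter alphabet a word is determined by its length, so a language is a set of lengths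
and concatenation is pointwise addition of these sets. Unfolding the recursions this way gives
`B_1^{2k+1} = 0^{[3k, 3k+1]}`, `B_1^{2k+2} = 0^{3k+2}`, `B_2^{2k+1} = 0^{[3k-1, 3k+1]}` and
`B_2^{2k+2} = 0^{[3k+1, 3k+3]}`, after which the inclusion is a comparison of intervals.
-/

open Set Pointwise

namespace Language

variable {α : Type*}

def ofLengths (S : Set ℕ) : Language α := List.length ⁻¹' S

theorem mem_ofLengths {S : Set ℕ} {w : List α} : w ∈ ofLengths S ↔ w.length ∈ S := Iff.rfl

theorem ofLengths_mono {S T : Set ℕ} (h : S ⊆ T) :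
    (ofLengths S : Language α) ≤ ofLengths T :=
  fun _ hw => h hw

variable [Unique α]

theorem length_eq_iff_eq_replicate {w : List α} {n : ℕ} :
    w.length = n ↔ w = List.replicate n default := by
  simp [List.eq_replicate_iff, Unique.eq_default]

theorem ofLengths_singleton (n : ℕ) :
    (ofLengths {n} : Language α) = {List.replicate n default} := by
  ext w
  exact length_eq_iff_eq_replicate

theorem ofLengths_insert (n : ℕ) (S : Set ℕ) :
    (ofLengths (insert n S) : Language α) = insert (List.replicate n default) (ofLengths S) := by
  ext w
  exact or_congr_left length_eq_iff_eq_replicate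

theorem ofLengths_add (S T : Set ℕ) :
    (ofLengths (S + T) : Language α) = ofLengths S * ofLengths T := by
  ext w
  rw [mem_mul, mem_ofLengths, Set.mem_add]
  constructor
  · rintro ⟨m, hm, n, hn, hmn⟩
    refine ⟨List.replicate m default, by simpa [mem_ofLengths],
      List.replicate n default, by simpa [mem_ofLengths], ?_⟩
    rw [← List.replicate_add, hmn]
    exact (length_eq_iff_eq_replicate.1 rfl).symm
  · rintro ⟨x, hx, y, hy, rfl⟩
    exact ⟨x.length, hx, y.length, hy, (List.length_append ..).symm⟩

end Language

open Language

theorem B1_two_mul_add_four (k : ℕ) : B1 (2 * k + 4) = B1 (2 * k + 2) * ofLengths {3} := by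
  rw [B1, if_pos (by omega), ofLengths_singleton]; rfl

theorem B1_two_mul_add_three (k : ℕ) :
    B1 (2 * k + 3) = B1 (2 * k + 2) * ofLengths (Icc 1 2) := by
  rw [B1, if_neg (by omega), show Icc 1 2 = {1, 2} by ext; simp; omega, ofLengths_insert,
    ofLengths_singleton]; rfl

theorem B2_two_mul_add_four (k : ℕ) : B2 (2 * k + 4) = B2 (2 * k + 3) * ofLengths {2} := by
  rw [B2, if_pos (by omega), ofLengths_singleton]; rfl

theorem B2_two_mul_add_three (k : ℕ) : B2 (2 * k + 3) = B2 (2 * k + 2) * ofLengths {1} := by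
  rw [B2, if_neg (by omega), ofLengths_singleton]; rfl

theorem B1_two_mul_add_two (k : ℕ) : B1 (2 * k + 2) = ofLengths {3 * k + 2} := by
  induction k with
  | zero => rw [B1, ofLengths_singleton]; rfl
  | succ k ih =>
    rw [show 2 * (k + 1) + 2 = 2 * k + 4 by ring, B1_two_mul_add_four, ih, ← ofLengths_add,
      singleton_add_singleton]
    ring_nf

theorem B1_two_mul_add_one (k : ℕ) :
    B1 (2 * k + 1) = ofLengths (Icc (3 * k) (3 * k + 1)) := by
  cases k with
  | zero =>
    rw [B1, show Icc (3 * 0) (3 * 0 + 1) = {0, 1} by ext; simp; omega, ofLengths_insert,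
      ofLengths_singleton]; rfl
  | succ k =>
    rw [show 2 * (k + 1) + 1 = 2 * k + 3 by ring, B1_two_mul_add_three, B1_two_mul_add_two,
      ← ofLengths_add, singleton_add, image_const_add_Icc]
    ring_nf

theorem B2_two_mul_add_two (k : ℕ) :
    B2 (2 * k + 2) = ofLengths (Icc (3 * k + 1) (3 * k + 3)) := by
  induction k with
  | zero =>
    rw [B2, show Icc (3 * 0 + 1) (3 * 0 + 3) = {1, 2, 3} by ext; simp; omega, ofLengths_insert,
      ofLengths_insert, ofLengths_singleton]; rfl
  | succ k ih =>
    rw [show 2 * (k + 1) + 2 = 2 * k + 4 by ring, B2_two_mul_add_four, B2_two_mul_add_three, ih,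
      ← ofLengths_add, ← ofLengths_add, add_singleton, add_singleton, image_add_const_Icc,
      image_add_const_Icc]
    ring_nf

-- At `k = 0` the truncated subtraction makes the interval `[0, 1]`, the lengths of `B_2^1`.
theorem B2_two_mul_add_one (k : ℕ) :
    B2 (2 * k + 1) = ofLengths (Icc (3 * k - 1) (3 * k + 1)) := by
  cases k with
  | zero =>
    rw [B2, show Icc (3 * 0 - 1) (3 * 0 + 1) = {0, 1} by ext; simp; omega, ofLengths_insert,
      ofLengths_singleton]; rfl
  | succ k =>
    rw [show 2 * (k + 1) + 1 = 2 * k + 3 by ring, B2_two_mul_add_three, B2_two_mul_add_two,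
      ← ofLengths_add, add_singleton, image_add_const_Icc,
      show 3 * (k + 1) - 1 = 3 * k + 1 + 1 by omega, show 3 * (k + 1) + 1 = 3 * k + 3 + 1 by ring]

/-- Lemma A.7: for all `j ≥ 1`, `B_1^{j+1} ⊆ B_2^j · {0}`. -/
theorem stmt18 : ∀ j : ℕ, 1 ≤ j → B1 (j + 1) ≤ B2 j * {[0]} := by
  intro j hj
  rw [show ({[0]} : Language (Fin 1)) = ofLengths {1} from (ofLengths_singleton 1).symm]
  obtain ⟨k, rfl | rfl⟩ := Nat.even_or_odd' j
  · obtain ⟨k, rfl⟩ : ∃ i, k = i + 1 := ⟨k - 1, by omega⟩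
    rw [B1_two_mul_add_one, show 2 * (k + 1) = 2 * k + 2 by ring, B2_two_mul_add_two,
      ← ofLengths_add]
    refine ofLengths_mono fun n hn => ?_
    simp only [add_singleton, image_add_const_Icc, mem_Icc] at hn ⊢
    omega
  · rw [B1_two_mul_add_two, B2_two_mul_add_one, ← ofLengths_add]
    refine ofLengths_mono fun n hn => ?_
    simp only [add_singleton, image_add_const_Icc, mem_Icc, mem_singleton_iff] at hn ⊢
    omega
end
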